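/- For coprime positive integers a, b, the reciprocity law for inversion numbers holds: a·inv(a,b) + b·inv(b,a) = (a-1)(b-1)(a+b-1)/4. -/

import Mathlib

/-- The sawtooth function ((x)): 0 if x is an integer, else x - ⌊x⌋ - 1/2. -/
def sawtooth (x : ℚ) : ℚ := if x.den = 1 then 0 else x - ⌊x⌋ - 1/2

/-- The Dedekind sum s(a,b) = ∑_{i=1}^{b-1} (i/b)·((a·i/b)). -/
def dedekindSum (a b : ℕ) : ℚ :=
  ∑ i ∈ Finset.Icc 1 (b - 1), (i : ℚ) / (b : ℚ) * sawtooth ((a * i : ℕ) / (b : ℚ))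

/-- Representative of a·x mod b in {1, ..., b}. -/
def modRep (a b x : ℕ) : ℕ := if a * x % b = 0 then b else a * x % b

/-- inv(a,b): number of pairs 1 ≤ i < j ≤ b with a·i mod b > a·j mod b
(representatives in {1,...,b}). -/
def invNum (a b : ℕ) : ℕ :=
  ((Finset.Icc 1 b ×ˢ Finset.Icc 1 b).filter
    (fun p => p.1 < p.2 ∧ modRep a b p.2 < modRep a b p.1)).card

/-!
Write `a k = b ⌊a k / b⌋ + r k` with `r k = a k mod b`, for `1 ≤ k ≤ b - 1`. A pair `i < j` is
an inversion of `r` exactly when adding `a i` and `a (j - i)` carries modulo `b`, i.e. when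
`⌊a j / b⌋ - ⌊a i / b⌋ - ⌊a (j - i) / b⌋ = 1`; summing over pairs expresses `inv(a, b)` through
`S = ∑ ⌊a k / b⌋` and `K = ∑ k ⌊a k / b⌋`. As `r` permutes `1, …, b - 1`, summing `r k` and
`r k ^ 2` computes `S` and relates `K` to `D = ∑ ⌊a k / b⌋ ^ 2`, while counting lattice points
(weighted by height) on both sides of the line `b y = a x` relates `D` to `K` with `a` and `b`
exchanged. Eliminating `D` gives the reciprocity law.
-/

open Finset

theorem Nat.add_div_eq_add_add_ite_mod_lt {x y c : ℕ} (hc : 0 < c) :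
    (x + y) / c = x / c + y / c + if (x + y) % c < x % c then 1 else 0 := by
  rw [Nat.add_div hc]
  have hcarry := Nat.add_mod_add_ite x y c
  have := Nat.mod_lt y hc
  split_ifs at hcarry ⊢ <;> omega

theorem Nat.Coprime.mul_mod_ne_zero {a b k : ℕ} (h : a.Coprime b) (hk : k ∈ Icc 1 (b - 1)) :
    a * k % b ≠ 0 := fun h0 => by
  have hk' := mem_Icc.1 hk
  have := Nat.le_of_dvd (by omega) (h.symm.dvd_of_dvd_mul_left (Nat.dvd_of_mod_eq_zero h0))
  omega

theorem sum_Icc_id (n : ℕ) : ∑ i ∈ Icc 1 n, (i : ℚ) = n * (n + 1) / 2 := by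
  induction n with
  | zero => simp
  | succ n ih =>
    rw [sum_Icc_succ_top (by omega), ih]
    push_cast
    ring

theorem sum_Icc_sq (n : ℕ) : ∑ i ∈ Icc 1 n, (i : ℚ) ^ 2 = n * (n + 1) * (2 * n + 1) / 6 := by
  induction n with
  | zero => simp
  | succ n ih =>
    rw [sum_Icc_succ_top (by omega), ih]
    push_cast
    ring

theorem Nat.Coprime.sum_Icc_mul_mod {M : Type*} [AddCommMonoid M] {a b : ℕ} (h : a.Coprime b)
    (g : ℕ → M) : ∑ k ∈ Icc 1 (b - 1), g (a * k % b) = ∑ k ∈ Icc 1 (b - 1), g k := by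
  have hmaps : ∀ k ∈ Icc 1 (b - 1), a * k % b ∈ Icc 1 (b - 1) := fun k hk => by
    have := h.mul_mod_ne_zero hk
    have := Nat.mod_lt (a * k) (show 0 < b by simp only [mem_Icc] at hk; omega)
    simp only [mem_Icc]
    omega
  have hinj : Set.InjOn (fun k => a * k % b) (Icc 1 (b - 1)) := fun x hx y hy hxy => by
    have hmod : x ≡ y [MOD b] := Nat.ModEq.cancel_left_of_coprime (by rwa [Nat.gcd_comm]) hxy
    simp only [coe_Icc, Set.mem_Icc] at hx hy
    rwa [Nat.ModEq, Nat.mod_eq_of_lt (by omega), Nat.mod_eq_of_lt (by omega)] at hmod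
  have himage : (Icc 1 (b - 1)).image (fun k => a * k % b) = Icc 1 (b - 1) :=
    eq_of_subset_of_card_le (image_subset_iff.2 hmaps) (Finset.card_image_of_injOn hinj).ge
  conv_rhs => rw [← himage]
  rw [sum_image hinj]

theorem sum_Ico_sub_eq {M : Type*} [AddCommMonoid M] (g : ℕ → M) (j : ℕ) :
    ∑ i ∈ Ico 1 j, g (j - i) = ∑ i ∈ Ico 1 j, g i := by
  rw [sum_Ico_reflect g 1 (Nat.le_succ j), Nat.add_sub_cancel_left, Nat.add_sub_cancel]

theorem sum_Icc_sum_Ico (g : ℕ → ℚ) (n : ℕ) :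
    ∑ j ∈ Icc 1 n, ∑ i ∈ Ico 1 j, g i = ∑ i ∈ Icc 1 n, (n - i : ℚ) * g i := by
  rw [sum_comm' (t' := Icc 1 n) (s' := fun i => Ioc i n)
    (by intros; simp only [mem_Icc, mem_Ico, mem_Ioc]; omega)]
  refine sum_congr rfl fun i hi => ?_
  rw [sum_const, Nat.card_Ioc, nsmul_eq_mul, Nat.cast_sub (mem_Icc.1 hi).2]

def floorSum (a b : ℕ) : ℚ := ∑ k ∈ Icc 1 (b - 1), ((a * k / b : ℕ) : ℚ)

def floorSqSum (a b : ℕ) : ℚ := ∑ k ∈ Icc 1 (b - 1), ((a * k / b : ℕ) : ℚ) ^ 2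

def weightedFloorSum (a b : ℕ) : ℚ := ∑ k ∈ Icc 1 (b - 1), (k : ℚ) * (a * k / b : ℕ)

section

variable {a b : ℕ}

theorem cast_mul_div_add_cast_mul_mod (a b k : ℕ) :
    (b : ℚ) * (a * k / b : ℕ) + (a * k % b : ℕ) = a * k := by
  exact_mod_cast Nat.div_add_mod (a * k) b

theorem floorSum_eq (h : a.Coprime b) (hb : 1 ≤ b) :
    floorSum a b = (a - 1) * (b - 1) / 2 := by
  have hperm := h.sum_Icc_mul_mod (fun k => (k : ℚ))
  have hsum : (b : ℚ) * floorSum a b = (a - 1) * ∑ k ∈ Icc 1 (b - 1), (k : ℚ) := by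
    rw [floorSum, mul_sum, sub_one_mul, mul_sum, ← hperm, ← sum_sub_distrib]
    exact sum_congr rfl fun k _ => by linear_combination cast_mul_div_add_cast_mul_mod a b k
  rw [sum_Icc_id, Nat.cast_pred hb] at hsum
  refine mul_left_cancel₀ (show (b : ℚ) ≠ 0 by positivity) ?_
  linear_combination hsum

theorem mul_floorSqSum_sub_weightedFloorSum (h : a.Coprime b) (hb : 1 ≤ b) :
    b * floorSqSum a b - 2 * a * weightedFloorSum a b
      = (1 - a ^ 2) * (b - 1) * (2 * b - 1) / 6 := by
  have hperm := h.sum_Icc_mul_mod (fun k => (k : ℚ) ^ 2)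
  have hsum : (b : ℚ) ^ 2 * floorSqSum a b - 2 * a * b * weightedFloorSum a b
      = (1 - a ^ 2) * ∑ k ∈ Icc 1 (b - 1), (k : ℚ) ^ 2 := by
    rw [floorSqSum, weightedFloorSum, mul_sum, mul_sum, sub_mul, one_mul, mul_sum, ← hperm,
      ← sum_sub_distrib, ← sum_sub_distrib]
    refine sum_congr rfl fun k _ => ?_
    have hdiv := cast_mul_div_add_cast_mul_mod a b k
    linear_combination (b * ↑(a * k / b) - a * k - ↑(a * k % b)) * hdiv
  rw [sum_Icc_sq, Nat.cast_pred hb] at hsum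
  refine mul_left_cancel₀ (show (b : ℚ) ≠ 0 by positivity) ?_
  linear_combination hsum

theorem filter_Icc_mul_le_mul_eq_Icc {k : ℕ} (ha : 0 < a) (hk : k < b) :
    {l ∈ Icc 1 (a - 1) | b * l ≤ a * k} = Icc 1 (a * k / b) := by
  have hb : 0 < b := by omega
  have hlt : a * k / b < a :=
    Nat.div_lt_of_lt_mul (by rw [mul_comm b]; exact Nat.mul_lt_mul_of_pos_left hk ha)
  ext l
  have hdiv : l ≤ a * k / b ↔ b * l ≤ a * k := by rw [Nat.le_div_iff_mul_le hb, mul_comm]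
  simp only [mem_filter, mem_Icc]
  omega

theorem floorSqSum_add_floorSum_add_weightedFloorSum (h : a.Coprime b) (ha : 1 ≤ a) (hb : 1 ≤ b) :
    floorSqSum a b + floorSum a b + 2 * weightedFloorSum b a = (b - 1) * a * (a - 1) := by
  have hbelow : ∀ k ∈ Icc 1 (b - 1), ∑ l ∈ Icc 1 (a - 1), (if b * l ≤ a * k then (l : ℚ) else 0)
      = (((a * k / b : ℕ) : ℚ) ^ 2 + (a * k / b : ℕ)) / 2 := fun k hk => by
    rw [← sum_filter, filter_Icc_mul_le_mul_eq_Icc ha (by grind), sum_Icc_id]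
    ring
  have habove : ∀ l ∈ Icc 1 (a - 1), ∑ k ∈ Icc 1 (b - 1), (if a * k < b * l then (l : ℚ) else 0)
      = l * (b * l / a : ℕ) := fun l hl => by
    have hne : ∀ k ∈ Icc 1 (b - 1), a * k ≠ b * l := fun k hk heq =>
      h.mul_mod_ne_zero hk (by rw [heq, Nat.mul_mod_right])
    have hfilter : {k ∈ Icc 1 (b - 1) | a * k < b * l} = {k ∈ Icc 1 (b - 1) | a * k ≤ b * l} :=
      filter_congr fun k hk => by have := hne k hk; omega
    rw [← sum_filter, hfilter,
      filter_Icc_mul_le_mul_eq_Icc hb (by grind), sum_const, Nat.card_Icc, nsmul_eq_mul]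
    push_cast
    ring
  have hsplit : ∑ k ∈ Icc 1 (b - 1), ∑ l ∈ Icc 1 (a - 1), (l : ℚ)
      = ∑ k ∈ Icc 1 (b - 1), ∑ l ∈ Icc 1 (a - 1), (if b * l ≤ a * k then (l : ℚ) else 0)
        + ∑ l ∈ Icc 1 (a - 1), ∑ k ∈ Icc 1 (b - 1), (if a * k < b * l then (l : ℚ) else 0) := by
    rw [sum_comm (s := Icc 1 (a - 1)), ← sum_add_distrib]
    refine sum_congr rfl fun k _ => ?_
    rw [← sum_add_distrib]
    exact sum_congr rfl fun l _ => by split_ifs <;> first | omega | ring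
  rw [sum_congr rfl hbelow, sum_congr rfl habove, sum_const, Nat.card_Icc, nsmul_eq_mul,
    sum_Icc_id, ← sum_div, sum_add_distrib] at hsplit
  rw [floorSqSum, floorSum, weightedFloorSum]
  push_cast [ha, hb] at hsplit
  linear_combination -2 * hsplit

theorem modRep_of_mem_Icc (h : a.Coprime b) {x : ℕ} (hx : x ∈ Icc 1 (b - 1)) :
    modRep a b x = a * x % b :=
  if_neg (h.mul_mod_ne_zero hx)

theorem modRep_le (hb : 0 < b) (x : ℕ) : modRep a b x ≤ b := by
  unfold modRep
  split_ifs
  exacts [le_rfl, (Nat.mod_lt _ hb).le]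

theorem modRep_self : modRep a b b = b := by
  simp [modRep]

theorem invNum_eq_sum_ite (h : a.Coprime b) :
    (invNum a b : ℚ)
      = ∑ j ∈ Icc 1 (b - 1), ∑ i ∈ Ico 1 j, if a * j % b < a * i % b then 1 else 0 := by
  obtain _ | n := b
  · simp [invNum]
  have htop : ∑ i ∈ Icc 1 (n + 1),
      (if i < n + 1 ∧ modRep a (n + 1) (n + 1) < modRep a (n + 1) i then (1 : ℚ) else 0) = 0 :=
    sum_eq_zero fun i _ => if_neg fun hi => by
      have := modRep_le (a := a) (b := n + 1) (by omega) i
      rw [modRep_self] at hi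
      omega
  rw [invNum, natCast_card_filter, sum_product_right, sum_Icc_succ_top (by omega), htop, add_zero,
    Nat.add_sub_cancel]
  refine sum_congr rfl fun j hj => ?_
  have hIco : {i ∈ Icc 1 (n + 1) | i < j} = Ico 1 j := by
    ext i
    simp only [mem_filter, mem_Icc, mem_Ico] at hj ⊢
    omega
  simp only [ite_and]
  rw [← sum_filter, hIco]
  refine sum_congr rfl fun i hi => ?_
  rw [modRep_of_mem_Icc h (by simpa using hj),
    modRep_of_mem_Icc h (by simp only [mem_Icc, mem_Ico] at hi hj ⊢; omega)]

theorem ite_mul_mod_lt_eq_div_sub_div_sub_div (hb : 0 < b) {i j : ℕ} (hij : i ≤ j) :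
    (if a * j % b < a * i % b then (1 : ℚ) else 0)
      = (a * j / b : ℕ) - (a * i / b : ℕ) - (a * (j - i) / b : ℕ) := by
  have hcarry := Nat.add_div_eq_add_add_ite_mod_lt (x := a * i) (y := a * (j - i)) hb
  rw [← Nat.mul_add, Nat.add_sub_cancel' hij] at hcarry
  rw [hcarry]
  push_cast
  split_ifs <;> ring

theorem invNum_eq_weightedFloorSum_sub_floorSum (h : a.Coprime b) (hb : 1 ≤ b) :
    (invNum a b : ℚ) = 3 * weightedFloorSum a b - (2 * b - 1) * floorSum a b := by
  have hcarries : ∀ j ∈ Icc 1 (b - 1),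
      ∑ i ∈ Ico 1 j, (if a * j % b < a * i % b then (1 : ℚ) else 0)
        = (j - 1) * (a * j / b : ℕ) - 2 * ∑ i ∈ Ico 1 j, ((a * i / b : ℕ) : ℚ) := fun j hj => by
    rw [sum_congr rfl fun i hi => ite_mul_mod_lt_eq_div_sub_div_sub_div hb (mem_Ico.1 hi).2.le,
      sum_sub_distrib, sum_sub_distrib, sum_Ico_sub_eq (fun k => ((a * k / b : ℕ) : ℚ)),
      sum_const, Nat.card_Ico, nsmul_eq_mul, Nat.cast_pred (mem_Icc.1 hj).1]
    ring
  rw [invNum_eq_sum_ite h, sum_congr rfl hcarries, sum_sub_distrib, ← mul_sum, sum_Icc_sum_Ico,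
    Nat.cast_pred hb, weightedFloorSum, floorSum, mul_sum, mul_sum, mul_sum, ← sum_sub_distrib,
    ← sum_sub_distrib]
  exact sum_congr rfl fun k _ => by ring

end

theorem stmt7 (a b : ℕ) (ha : 1 ≤ a) (hb : 1 ≤ b) (h : Nat.Coprime a b) :
    (a : ℚ) * invNum a b + (b : ℚ) * invNum b a =
      ((a : ℚ) - 1) * ((b : ℚ) - 1) * ((a : ℚ) + b - 1) / 4 := by
  have hab := invNum_eq_weightedFloorSum_sub_floorSum h hb
  have hba := invNum_eq_weightedFloorSum_sub_floorSum h.symm ha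
  have hSab := floorSum_eq h hb
  have hSba := floorSum_eq h.symm ha
  have hD := mul_floorSqSum_sub_weightedFloorSum h hb
  have hlattice := floorSqSum_add_floorSum_add_weightedFloorSum h ha hb
  linear_combination (a : ℚ) * hab + b * hba - 3 / 2 * hD + 3 * b / 2 * hlattice
    - (a * (2 * b - 1) + 3 * b / 2) * hSab - b * (2 * a - 1) * hSba
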